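/- Let J ⊆ ℝ be an interval and y : J → ℝ be differentiable with x ≠ 0 and x ≠ 2·y(x)² for all x ∈ J, satisfying y'(x) = −(x²·e^{y(x)²/x} − x²·y(x) + y(x)³)/(x·(x − 2·y(x)²)) on J. Then the function x ↦ (y(x) − e^{y(x)²/x})·e^{−x}·e^{−y(x)²/x} is constant on J. -/

import Mathlib

/-!
Write `u = y²/x`. The invariant equals `(y·e^{-u} - 1)·e^{-x}`, whose derivative along
a curve is `e^{-x}·e^{-u}·(y' - y·u' - y + e^u)`. Since `u' = (2xyy' - y²)/x²`, the vanishing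
of the last factor is `y'·(x - 2y²)/x = y - e^u - y³/x²`, i.e. the differential equation.
-/

open Real

noncomputable section

theorem Convex.eq_of_forall_hasDerivAt_zero {E : Type*} [NormedAddCommGroup E] [NormedSpace ℝ E]
    {s : Set ℝ} {f : ℝ → E} (hs : Convex ℝ s) (hf : ∀ x ∈ s, HasDerivAt f 0 x)
    {a b : ℝ} (ha : a ∈ s) (hb : b ∈ s) : f a = f b := by
  have h := hs.norm_image_sub_le_of_norm_hasDerivWithin_le (C := 0)
    (fun x hx => (hf x hx).hasDerivWithinAt) (fun _ _ => norm_zero.le) hb ha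
  rwa [zero_mul, norm_le_zero_iff, sub_eq_zero] at h

def odeRhs (x y : ℝ) : ℝ :=
  -(x ^ 2 * exp (y ^ 2 / x) - x ^ 2 * y + y ^ 3) / (x * (x - 2 * y ^ 2))

def invariant (x y : ℝ) : ℝ :=
  (y - exp (y ^ 2 / x)) * exp (-x) * exp (-(y ^ 2 / x))

theorem hasDerivAt_sub_exp_mul_exp_neg_mul_exp_neg {y u : ℝ → ℝ} {y' u' x : ℝ}
    (hy : HasDerivAt y y' x) (hu : HasDerivAt u u' x) :
    HasDerivAt (fun t => (y t - exp (u t)) * exp (-t) * exp (-u t))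
      (exp (-x) * exp (-u x) * (y' - y x * u' - y x + exp (u x))) x := by
  refine (((hy.sub hu.exp).mul (hasDerivAt_neg x).exp).mul hu.neg.exp).congr_deriv ?_
  simp only [Pi.sub_apply, Pi.mul_apply, Pi.neg_apply]
  ring

theorem odeRhs_sub_mul_deriv_sq_div {x y : ℝ} (hx : x ≠ 0) (hxy : x ≠ 2 * y ^ 2) :
    odeRhs x y - y * ((2 * y * odeRhs x y * x - y ^ 2) / x ^ 2) = y - exp (y ^ 2 / x) := by
  have hxy' : x * (x - 2 * y ^ 2) ≠ 0 := mul_ne_zero hx (sub_ne_zero.mpr hxy)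
  have hrhs : odeRhs x y * (x * (x - 2 * y ^ 2)) = -(x ^ 2 * exp (y ^ 2 / x) - x ^ 2 * y + y ^ 3) :=
    div_mul_cancel₀ _ hxy'
  field_simp
  linear_combination hrhs

theorem hasDerivAt_invariant_of_hasDerivAt_odeRhs {y : ℝ → ℝ} {x : ℝ} (hx : x ≠ 0)
    (hxy : x ≠ 2 * y x ^ 2) (hy : HasDerivAt y (odeRhs x (y x)) x) :
    HasDerivAt (fun t => invariant t (y t)) 0 x := by
  have hu : HasDerivAt (fun t => y t ^ 2 / t)
      ((2 * y x * odeRhs x (y x) * x - y x ^ 2) / x ^ 2) x := by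
    refine ((hy.fun_pow 2).div (hasDerivAt_id' x) hx).congr_deriv ?_
    ring
  refine (hasDerivAt_sub_exp_mul_exp_neg_mul_exp_neg hy hu).congr_deriv ?_
  rw [odeRhs_sub_mul_deriv_sq_div hx hxy]
  ring

end

theorem invariant_constant_exp_1ode
    (J : Set ℝ) (hJ : J.OrdConnected) (y : ℝ → ℝ)
    (hx0 : ∀ x ∈ J, x ≠ 0)
    (hx2 : ∀ x ∈ J, x ≠ 2 * (y x) ^ 2)
    (hy : ∀ x ∈ J,
      HasDerivAt y
        (-(x ^ 2 * Real.exp ((y x) ^ 2 / x) - x ^ 2 * y x + (y x) ^ 3)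
          / (x * (x - 2 * (y x) ^ 2))) x) :
    ∀ a ∈ J, ∀ b ∈ J,
      (y a - Real.exp ((y a) ^ 2 / a)) * Real.exp (-a) * Real.exp (-((y a) ^ 2 / a))
        = (y b - Real.exp ((y b) ^ 2 / b)) * Real.exp (-b)
            * Real.exp (-((y b) ^ 2 / b)) := fun _ ha _ hb =>
  hJ.convex.eq_of_forall_hasDerivAt_zero (f := fun t => invariant t (y t))
    (fun x hx => hasDerivAt_invariant_of_hasDerivAt_odeRhs (hx0 x hx) (hx2 x hx) (hy x hx)) ha hb
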